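/- arXiv:math/0512041 — 2 statements merged into one kernel-verified Lean document; each statement's English description precedes it below -/
import Mathlib

section
/- Hypoellipticity of the decay weight symbol: the symbol d(x,ξ,τ) = (1 + |x|²/(μ + |τ| + |ξ|²))^{1/4 + ε/2} on ℝ² × ℝ² × ℝ (with μ ≥ 1, 0 < ε < 1/2) satisfies, for all multi-indices α, β, |∂_ξ^α ∂_x^β d(x,ξ,τ)| ≤ C_{αβ} · d(x,ξ,τ) · ⟨(ξ,τ)⟩^{-|α|} for all (x,ξ,τ), where ⟨(ξ,τ)⟩ = (1 + |τ| + |ξ|²)^{1/2}. -/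
/-- The decay-weight symbol `d(x,ξ,τ) = (1 + |x|²/(μ+|τ|+|ξ|²))^{1/4+ε/2}` on
`ℝ²_x × ℝ²_ξ × ℝ_τ`, encoded on `(ℝ×ℝ) × (ℝ×ℝ) × ℝ`. -/
noncomputable def decaySymbol (μ ε : ℝ) : (ℝ × ℝ) × (ℝ × ℝ) × ℝ → ℝ :=
  fun p => (1 + (p.1.1 ^ 2 + p.1.2 ^ 2) / (μ + |p.2.2| + p.2.1.1 ^ 2 + p.2.1.2 ^ 2))
    ^ (1 / 4 + ε / 2 : ℝ)

/-- `k`-fold directional (partial) derivative in the direction `v`. -/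
noncomputable def pdir (v : (ℝ × ℝ) × (ℝ × ℝ) × ℝ) (k : ℕ)
    (f : (ℝ × ℝ) × (ℝ × ℝ) × ℝ → ℝ) : (ℝ × ℝ) × (ℝ × ℝ) × ℝ → ℝ :=
  (fun g p => lineDeriv ℝ g p v)^[k] f

/-!
Write `D = μ + |τ| + |ξ|²` and `g = 1 + |x|²/D`, so that `d = g^r` with `r = 1/4 + ε/2`. Every
derivative `∂_ξ^α ∂_x^β d` is a finite sum of terms `c x^e ξ^f D^{-m} g^{r-k}` satisfying
`|e| ≤ 2k` and `|e| + |f| + |α| ≤ 2m`: an `x`-derivative preserves both inequalities and a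
`ξ`-derivative gains a factor `D^{-1/2}`. Since `|xᵢ| ≤ √(gD)`, `|ξᵢ| ≤ √D` and `g, D ≥ 1`, such a
term is `O(g^r D^{-|α|/2})`, and `D ≥ ⟨(ξ,τ)⟩²` because `μ ≥ 1`. The derivatives in `x₂` and
`ξ₂` are those in `x₁` and `ξ₁` conjugated by the exchange of the two coordinates.
-/

lemma sqrt_pow_mul_rpow {x : ℝ} (hx : 0 < x) (n : ℕ) (s : ℝ) :
    √x ^ n * x ^ s = x ^ ((n : ℝ) / 2 + s) := by
  rw [Real.sqrt_eq_rpow, ← Real.rpow_natCast, ← Real.rpow_mul hx.le, ← Real.rpow_add hx]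
  ring_nf

lemma sqrt_pow_mul_rpow_sub_le {g : ℝ} (hg : 1 ≤ g) {n k : ℕ} (h : n ≤ 2 * k) (r : ℝ) :
    √g ^ n * g ^ (r - k) ≤ g ^ r := by
  rw [sqrt_pow_mul_rpow (one_pos.trans_le hg)]
  apply Real.rpow_le_rpow_of_exponent_le hg
  have : (n : ℝ) ≤ 2 * k := by exact_mod_cast h
  linarith

lemma sqrt_pow_mul_inv_pow_le {D Q : ℝ} (hQ : 1 ≤ Q) (hQD : Q ≤ D) {n m A : ℕ}
    (h : n + A ≤ 2 * m) : √D ^ n * D⁻¹ ^ m ≤ √Q ^ (-(A : ℝ)) := by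
  have hD : 1 ≤ D := hQ.trans hQD
  have hD0 : 0 < D := one_pos.trans_le hD
  have hA : (n : ℝ) + A ≤ 2 * m := by exact_mod_cast h
  calc √D ^ n * D⁻¹ ^ m = D ^ ((n : ℝ) / 2 + -m) := by
        rw [← sqrt_pow_mul_rpow hD0, Real.rpow_neg hD0.le, Real.rpow_natCast, inv_pow]
    _ ≤ D ^ (-(A : ℝ) / 2) := Real.rpow_le_rpow_of_exponent_le hD (by linarith)
    _ ≤ Q ^ (-(A : ℝ) / 2) :=
        Real.rpow_le_rpow_of_nonpos (one_pos.trans_le hQ) hQD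
          (by have := A.cast_nonneg (α := ℝ); linarith)
    _ = √Q ^ (-(A : ℝ)) := by
        rw [Real.sqrt_eq_rpow, ← Real.rpow_mul (zero_le_one.trans hQ)]; ring_nf

namespace DecayWeight

noncomputable section

abbrev Phase : Type := (ℝ × ℝ) × (ℝ × ℝ) × ℝ

variable {μ r : ℝ}

def denom (μ : ℝ) (p : Phase) : ℝ := μ + |p.2.2| + p.2.1.1 ^ 2 + p.2.1.2 ^ 2

def base (μ : ℝ) (p : Phase) : ℝ := 1 + (p.1.1 ^ 2 + p.1.2 ^ 2) / denom μ p

lemma denom_pos (hμ : 0 < μ) (p : Phase) : 0 < denom μ p := by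
  unfold denom; positivity

lemma one_le_base (hμ : 0 < μ) (p : Phase) : 1 ≤ base μ p := by
  have := denom_pos hμ p
  unfold base
  simp only [le_add_iff_nonneg_right]
  positivity

lemma base_pos (hμ : 0 < μ) (p : Phase) : 0 < base μ p :=
  one_pos.trans_le (one_le_base hμ p)

lemma base_mul_denom (hμ : 0 < μ) (p : Phase) :
    base μ p * denom μ p = denom μ p + (p.1.1 ^ 2 + p.1.2 ^ 2) := by
  rw [base, add_mul, div_mul_cancel₀ _ (denom_pos hμ p).ne', one_mul]

lemma bracket_le_denom (hμ : 1 ≤ μ) (p : Phase) :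
    1 + |p.2.2| + p.2.1.1 ^ 2 + p.2.1.2 ^ 2 ≤ denom μ p := by
  unfold denom; linarith

def swapPhase (p : Phase) : Phase := ((p.1.2, p.1.1), (p.2.1.2, p.2.1.1), p.2.2)

lemma denom_swapPhase (μ : ℝ) (p : Phase) : denom μ (swapPhase p) = denom μ p := by
  simp only [denom, swapPhase]; ring

lemma base_swapPhase (μ : ℝ) (p : Phase) : base μ (swapPhase p) = base μ p := by
  simp only [base, denom_swapPhase]; simp only [swapPhase]; ring

lemma swapPhase_add_smul (p v : Phase) (t : ℝ) :
    swapPhase (p + t • v) = swapPhase p + t • swapPhase v := rfl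

/-- The term `c · x₁^e₁ x₂^e₂ ξ₁^f₁ ξ₂^f₂ · D^{-m} · g^{r-k}` with `D = μ + |τ| + |ξ|²` and
`g = 1 + |x|²/D`, so that the symbol itself is `g^r`. -/
structure Term where
  c : ℝ
  e₁ : ℕ
  e₂ : ℕ
  f₁ : ℕ
  f₂ : ℕ
  m : ℕ
  k : ℕ

namespace Term

def eval (μ r : ℝ) (T : Term) (p : Phase) : ℝ :=
  T.c * p.1.1 ^ T.e₁ * p.1.2 ^ T.e₂ * p.2.1.1 ^ T.f₁ * p.2.1.2 ^ T.f₂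
    * (denom μ p)⁻¹ ^ T.m * base μ p ^ (r - T.k)

def swap (T : Term) : Term := ⟨T.c, T.e₂, T.e₁, T.f₂, T.f₁, T.m, T.k⟩

lemma eval_swap (T : Term) (p : Phase) : T.swap.eval μ r p = T.eval μ r (swapPhase p) := by
  simp only [eval, swap, denom_swapPhase, base_swapPhase]
  simp only [swapPhase]
  ring

/-- The case `c = 0` absorbs the truncated exponent `0 - 1 = 0` produced by differentiating a
factor `ξᵢ^0`. -/
def Admissible (A : ℕ) (T : Term) : Prop :=
  T.c = 0 ∨ (T.e₁ + T.e₂ ≤ 2 * T.k ∧ T.e₁ + T.e₂ + T.f₁ + T.f₂ + A ≤ 2 * T.m)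

lemma Admissible.swap {A : ℕ} {T : Term} (h : T.Admissible A) : T.swap.Admissible A :=
  h.imp id fun h => by simp only [Term.swap]; omega

def dx₁ (r : ℝ) (T : Term) : List Term :=
  [⟨T.c * T.e₁, T.e₁ - 1, T.e₂, T.f₁, T.f₂, T.m, T.k⟩,
   ⟨T.c * (2 * (r - T.k)), T.e₁ + 1, T.e₂, T.f₁, T.f₂, T.m + 1, T.k + 1⟩]

def dξ₁ (r : ℝ) (T : Term) : List Term :=
  [⟨T.c * T.f₁, T.e₁, T.e₂, T.f₁ - 1, T.f₂, T.m, T.k⟩,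
   ⟨T.c * (-2 * T.m), T.e₁, T.e₂, T.f₁ + 1, T.f₂, T.m + 1, T.k⟩,
   ⟨T.c * (-2 * (r - T.k)), T.e₁ + 2, T.e₂, T.f₁ + 1, T.f₂, T.m + 2, T.k + 1⟩,
   ⟨T.c * (-2 * (r - T.k)), T.e₁, T.e₂ + 2, T.f₁ + 1, T.f₂, T.m + 2, T.k + 1⟩]

end Term

open Term

def sumEval (μ r : ℝ) (L : List Term) (p : Phase) : ℝ := (L.map (·.eval μ r p)).sum

lemma sumEval_cons (T : Term) (L : List Term) (p : Phase) :
    sumEval μ r (T :: L) p = T.eval μ r p + sumEval μ r L p := List.sum_cons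

lemma sumEval_append (L L' : List Term) (p : Phase) :
    sumEval μ r (L ++ L') p = sumEval μ r L p + sumEval μ r L' p := by
  simp only [sumEval, List.map_append, List.sum_append]

lemma sumEval_map_swap (L : List Term) (p : Phase) :
    sumEval μ r (L.map swap) p = sumEval μ r L (swapPhase p) := by
  simp only [sumEval, List.map_map, Function.comp_def, eval_swap]

theorem hasDerivAt_eval_x₁ (hμ : 0 < μ) (T : Term) (x₁ x₂ ξ₁ ξ₂ τ : ℝ) :
    HasDerivAt (fun s => T.eval μ r ((s, x₂), (ξ₁, ξ₂), τ))
      (sumEval μ r (T.dx₁ r) ((x₁, x₂), (ξ₁, ξ₂), τ)) x₁ := by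
  set D := μ + |τ| + ξ₁ ^ 2 + ξ₂ ^ 2
  have hg : 1 + (x₁ ^ 2 + x₂ ^ 2) / D ≠ 0 := (base_pos hμ ((x₁, x₂), (ξ₁, ξ₂), τ)).ne'
  have hmono := ((hasDerivAt_pow T.e₁ x₁).const_mul T.c).mul_const
    (x₂ ^ T.e₂ * ξ₁ ^ T.f₁ * ξ₂ ^ T.f₂ * D⁻¹ ^ T.m)
  have hbase := ((((hasDerivAt_pow 2 x₁).add_const (x₂ ^ 2)).div_const D).const_add 1).rpow_const
    (p := r - T.k) (Or.inl hg)
  have hfun : (fun s => T.eval μ r ((s, x₂), (ξ₁, ξ₂), τ)) = fun s =>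
      T.c * s ^ T.e₁ * (x₂ ^ T.e₂ * ξ₁ ^ T.f₁ * ξ₂ ^ T.f₂ * D⁻¹ ^ T.m)
        * (1 + (s ^ 2 + x₂ ^ 2) / D) ^ (r - T.k) := by
    ext s; simp only [eval, base, denom, D]; ring
  rw [hfun]
  refine (hmono.mul hbase).congr_deriv ?_
  simp only [sumEval, dx₁, eval, base, denom, List.map_cons, List.map_nil, List.sum_cons,
    List.sum_nil, D]
  push_cast
  rw [sub_add_eq_sub_sub]
  ring

theorem hasDerivAt_eval_ξ₁ (hμ : 0 < μ) (T : Term) (x₁ x₂ ξ₁ ξ₂ τ : ℝ) :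
    HasDerivAt (fun s => T.eval μ r ((x₁, x₂), (s, ξ₂), τ))
      (sumEval μ r (T.dξ₁ r) ((x₁, x₂), (ξ₁, ξ₂), τ)) ξ₁ := by
  set X := x₁ ^ 2 + x₂ ^ 2
  have hD : μ + |τ| + ξ₁ ^ 2 + ξ₂ ^ 2 ≠ 0 := (denom_pos hμ ((x₁, x₂), (ξ₁, ξ₂), τ)).ne'
  have hg : 1 + X * (μ + |τ| + ξ₁ ^ 2 + ξ₂ ^ 2)⁻¹ ≠ 0 := by
    rw [← div_eq_mul_inv]; exact (base_pos hμ ((x₁, x₂), (ξ₁, ξ₂), τ)).ne'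
  have hinv : HasDerivAt (fun s => (μ + |τ| + s ^ 2 + ξ₂ ^ 2)⁻¹)
      (-2 * ξ₁ * (μ + |τ| + ξ₁ ^ 2 + ξ₂ ^ 2)⁻¹ ^ 2) ξ₁ := by
    refine ((((hasDerivAt_pow 2 ξ₁).const_add (μ + |τ|)).add_const (ξ₂ ^ 2)).inv hD).congr_deriv ?_
    rw [div_eq_mul_inv, ← inv_pow]
    push_cast
    ring
  have hmono := ((hasDerivAt_pow T.f₁ ξ₁).const_mul (T.c * x₁ ^ T.e₁ * x₂ ^ T.e₂)).mul_const
    (ξ₂ ^ T.f₂)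
  have hbase := ((hinv.const_mul X).const_add 1).rpow_const (p := r - T.k) (Or.inl hg)
  have hfun : (fun s => T.eval μ r ((x₁, x₂), (s, ξ₂), τ)) = fun s =>
      T.c * x₁ ^ T.e₁ * x₂ ^ T.e₂ * s ^ T.f₁ * ξ₂ ^ T.f₂ * (μ + |τ| + s ^ 2 + ξ₂ ^ 2)⁻¹ ^ T.m
        * (1 + X * (μ + |τ| + s ^ 2 + ξ₂ ^ 2)⁻¹) ^ (r - T.k) := by
    ext s; simp only [eval, base, denom, div_eq_mul_inv, X]
  rw [hfun]
  refine ((hmono.mul (hinv.pow T.m)).mul hbase).congr_deriv ?_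
  simp only [sumEval, dξ₁, eval, base, denom, div_eq_mul_inv, List.map_cons, List.map_nil,
    List.sum_cons, List.sum_nil, Pi.mul_apply, Pi.pow_apply, X]
  push_cast
  rw [sub_add_eq_sub_sub]
  -- the power rule leaves `(m : ℝ) * u ^ (m - 1)` with a truncated exponent
  rcases T.m with _ | m
  · ring
  · rw [Nat.add_sub_cancel]; push_cast; ring

structure DerivRule (μ r : ℝ) (v : Phase) (j : ℕ) where
  d : Term → List Term
  hasDerivAt : ∀ T p, HasDerivAt (fun t : ℝ => T.eval μ r (p + t • v)) (sumEval μ r (d T) p) 0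
  admissible : ∀ A T, T.Admissible A → ∀ T' ∈ d T, T'.Admissible (A + j)

namespace DerivRule

variable {v : Phase} {j : ℕ}

def swap (R : DerivRule μ r v j) : DerivRule μ r (swapPhase v) j where
  d T := (R.d T.swap).map Term.swap
  hasDerivAt T p := by
    rw [sumEval_map_swap]
    refine (R.hasDerivAt T.swap (swapPhase p)).congr_of_eventuallyEq (.of_forall fun t => ?_)
    show T.eval μ r (p + t • swapPhase v) = T.swap.eval μ r (swapPhase p + t • v)
    rw [eval_swap, swapPhase_add_smul]
    rfl
  admissible A T hT T' hT' := by
    obtain ⟨T'', hT'', rfl⟩ := List.mem_map.1 hT'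
    exact (R.admissible A T.swap hT.swap T'' hT'').swap

lemma hasDerivAt_sumEval (R : DerivRule μ r v j) (L : List Term) (p : Phase) :
    HasDerivAt (fun t : ℝ => sumEval μ r L (p + t • v)) (sumEval μ r (L.flatMap R.d) p) 0 := by
  induction L with
  | nil => exact hasDerivAt_const (0 : ℝ) (0 : ℝ)
  | cons T L ih =>
    simp only [sumEval_cons, List.flatMap_cons, sumEval_append]
    exact (R.hasDerivAt T p).add ih

end DerivRule

def DerivRule.x₁ (hμ : 0 < μ) : DerivRule μ r ((1, 0), (0, 0), 0) 0 where
  d := dx₁ r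
  hasDerivAt T := fun ⟨⟨x₁, x₂⟩, ⟨ξ₁, ξ₂⟩, τ⟩ => by
    have h := (hasDerivAt_eval_x₁ (r := r) hμ T (x₁ + 0) x₂ ξ₁ ξ₂ τ).comp_const_add x₁ 0
    simpa only [Prod.mk_add_mk, Prod.smul_mk, smul_eq_mul, mul_one, mul_zero, add_zero] using h
  admissible A T hT T' hT' := by
    simp only [dx₁, List.mem_cons, List.not_mem_nil, or_false] at hT'
    unfold Admissible at *
    rcases hT' with rfl | rfl <;> rcases hT with hc | hT <;> simp_all <;> omega

def DerivRule.ξ₁ (hμ : 0 < μ) : DerivRule μ r ((0, 0), (1, 0), 0) 1 where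
  d := dξ₁ r
  hasDerivAt T := fun ⟨⟨x₁, x₂⟩, ⟨ξ₁, ξ₂⟩, τ⟩ => by
    have h := (hasDerivAt_eval_ξ₁ (r := r) hμ T x₁ x₂ (ξ₁ + 0) ξ₂ τ).comp_const_add ξ₁ 0
    simpa only [Prod.mk_add_mk, Prod.smul_mk, smul_eq_mul, mul_one, mul_zero, add_zero] using h
  admissible A T hT T' hT' := by
    simp only [dξ₁, List.mem_cons, List.not_mem_nil, or_false] at hT'
    unfold Admissible at *
    rcases hT' with rfl | rfl | rfl | rfl <;> rcases hT with hc | hT <;> simp_all <;> omega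

def WeightClass (μ r : ℝ) (A : ℕ) (f : Phase → ℝ) : Prop :=
  ∃ L : List Term, (∀ T ∈ L, T.Admissible A) ∧ f = sumEval μ r L

theorem weightClass_decaySymbol (μ ε : ℝ) : WeightClass μ (1 / 4 + ε / 2) 0 (decaySymbol μ ε) := by
  refine ⟨[⟨1, 0, 0, 0, 0, 0, 0⟩], by simp [Admissible], ?_⟩
  funext p
  simp [sumEval, eval, decaySymbol, base, denom]

theorem WeightClass.pdir {v : Phase} {j A : ℕ} {f : Phase → ℝ} (R : DerivRule μ r v j)
    (hf : WeightClass μ r A f) (n : ℕ) : WeightClass μ r (A + n * j) (pdir v n f) := by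
  induction n with
  | zero => rw [zero_mul, add_zero]; exact hf
  | succ n ih =>
    obtain ⟨L, hL, hfL⟩ := ih
    refine ⟨L.flatMap R.d, fun T' hT' => ?_, ?_⟩
    · obtain ⟨T, hT, hT'⟩ := List.mem_flatMap.1 hT'
      rw [Nat.succ_mul, ← add_assoc]
      exact R.admissible _ T (hL T hT) T' hT'
    · rw [_root_.pdir, Function.iterate_succ_apply', ← _root_.pdir, hfL]
      funext p
      exact (R.hasDerivAt_sumEval L p).deriv

theorem Term.abs_eval_le (hμ : 1 ≤ μ) {A : ℕ} {T : Term} (hT : T.Admissible A) (p : Phase) :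
    |T.eval μ r p| ≤
      |T.c| * (base μ p ^ r * √(1 + |p.2.2| + p.2.1.1 ^ 2 + p.2.1.2 ^ 2) ^ (-(A : ℝ))) := by
  rcases hT with hc | ⟨hk, hm⟩
  · simp [eval, hc]
  obtain ⟨⟨x₁, x₂⟩, ⟨ξ₁, ξ₂⟩, τ⟩ := p
  have hμ0 : 0 < μ := one_pos.trans_le hμ
  set D := denom μ ((x₁, x₂), (ξ₁, ξ₂), τ) with hD
  set g := base μ ((x₁, x₂), (ξ₁, ξ₂), τ)
  have hD0 : 0 < D := denom_pos hμ0 _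
  have hg0 : 0 < g := base_pos hμ0 _
  have hx (a : ℝ) (ha : a ^ 2 ≤ x₁ ^ 2 + x₂ ^ 2) : |a| ≤ √g * √D := by
    rw [← Real.sqrt_mul hg0.le, base_mul_denom hμ0]
    exact Real.abs_le_sqrt (by linarith)
  have hξ (a : ℝ) (ha : a ^ 2 ≤ ξ₁ ^ 2 + ξ₂ ^ 2) : |a| ≤ √D :=
    Real.abs_le_sqrt (by simp only [hD, denom]; linarith [abs_nonneg τ])
  calc |T.eval μ r ((x₁, x₂), (ξ₁, ξ₂), τ)|
      = |T.c| * |x₁| ^ T.e₁ * |x₂| ^ T.e₂ * |ξ₁| ^ T.f₁ * |ξ₂| ^ T.f₂ * D⁻¹ ^ T.m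
          * g ^ (r - T.k) := by
        simp only [eval, abs_mul, abs_pow, abs_inv, abs_of_pos hD0,
          abs_of_pos (Real.rpow_pos_of_pos hg0 _), D, g]
    _ ≤ |T.c| * (√g * √D) ^ T.e₁ * (√g * √D) ^ T.e₂ * √D ^ T.f₁ * √D ^ T.f₂ * D⁻¹ ^ T.m
          * g ^ (r - T.k) := by
        gcongr
        · exact hx x₁ (le_add_of_nonneg_right (sq_nonneg x₂))
        · exact hx x₂ (le_add_of_nonneg_left (sq_nonneg x₁))
        · exact hξ ξ₁ (le_add_of_nonneg_right (sq_nonneg ξ₂))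
        · exact hξ ξ₂ (le_add_of_nonneg_left (sq_nonneg ξ₁))
    _ = |T.c| * ((√g ^ (T.e₁ + T.e₂) * g ^ (r - T.k))
          * (√D ^ (T.e₁ + T.e₂ + T.f₁ + T.f₂) * D⁻¹ ^ T.m)) := by ring
    _ ≤ _ := by
        gcongr
        · exact sqrt_pow_mul_rpow_sub_le (one_le_base hμ0 _) hk r
        · exact sqrt_pow_mul_inv_pow_le (by linarith [abs_nonneg τ, sq_nonneg ξ₁, sq_nonneg ξ₂])
            (bracket_le_denom hμ _) hm

theorem abs_sumEval_le (hμ : 1 ≤ μ) {A : ℕ} {L : List Term} (hL : ∀ T ∈ L, T.Admissible A)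
    (p : Phase) :
    |sumEval μ r L p| ≤ (L.map fun T => |T.c|).sum
      * (base μ p ^ r * √(1 + |p.2.2| + p.2.1.1 ^ 2 + p.2.1.2 ^ 2) ^ (-(A : ℝ))) := by
  induction L with
  | nil => simp [sumEval]
  | cons T L ih =>
    rw [sumEval_cons, List.map_cons, List.sum_cons, add_mul]
    exact (abs_add_le _ _).trans (add_le_add (T.abs_eval_le hμ (hL T (by simp)) p)
      (ih fun T' hT' => hL T' (by simp [hT'])))

theorem WeightClass.exists_bound (hμ : 1 ≤ μ) {A : ℕ} {f : Phase → ℝ} (hf : WeightClass μ r A f) :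
    ∃ C, 0 < C ∧ ∀ p : Phase,
      |f p| ≤ C * base μ p ^ r * √(1 + |p.2.2| + p.2.1.1 ^ 2 + p.2.1.2 ^ 2) ^ (-(A : ℝ)) := by
  obtain ⟨L, hL, rfl⟩ := hf
  have hC : 0 ≤ (L.map fun T => |T.c|).sum := List.sum_nonneg (by simp)
  refine ⟨(L.map fun T => |T.c|).sum + 1, by linarith, fun p => ?_⟩
  rw [mul_assoc]
  refine (abs_sumEval_le hμ hL p).trans (mul_le_mul_of_nonneg_right (by linarith) ?_)
  have := base_pos (one_pos.trans_le hμ) p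
  positivity

end

end DecayWeight

open DecayWeight in
theorem stmt_12_general (μ ε : ℝ) (hμ : 1 ≤ μ)
    (a1 a2 b1 b2 : ℕ) :
    ∃ C : ℝ, 0 < C ∧ ∀ p : (ℝ × ℝ) × (ℝ × ℝ) × ℝ,
      |pdir ((0, 0), (1, 0), 0) a1 (pdir ((0, 0), (0, 1), 0) a2
          (pdir ((1, 0), (0, 0), 0) b1 (pdir ((0, 1), (0, 0), 0) b2
            (decaySymbol μ ε)))) p|
        ≤ C * decaySymbol μ ε p *
            Real.sqrt (1 + |p.2.2| + p.2.1.1 ^ 2 + p.2.1.2 ^ 2)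
              ^ (-((a1 + a2 : ℕ) : ℝ)) := by
  have hμ0 : 0 < μ := one_pos.trans_le hμ
  have h := ((((weightClass_decaySymbol μ ε).pdir (DerivRule.x₁ hμ0).swap b2).pdir
    (DerivRule.x₁ hμ0) b1).pdir (DerivRule.ξ₁ hμ0).swap a2).pdir (DerivRule.ξ₁ hμ0) a1
  rw [show 0 + b2 * 0 + b1 * 0 + a2 * 1 + a1 * 1 = a1 + a2 by ring] at h
  exact h.exists_bound hμ

/-- Hypoellipticity of the decay weight symbol: for all multi-indices `α = (a1,a2)` (in ξ)
and `β = (b1,b2)` (in x), `|∂_ξ^α ∂_x^β d| ≤ C_{αβ} d ⟨(ξ,τ)⟩^{-|α|}` everywhere. -/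
theorem stmt_12 (μ ε : ℝ) (hμ : 1 ≤ μ) (hε : 0 < ε) (hε' : ε < 1 / 2)
    (a1 a2 b1 b2 : ℕ) :
    ∃ C : ℝ, 0 < C ∧ ∀ p : (ℝ × ℝ) × (ℝ × ℝ) × ℝ,
      |pdir ((0, 0), (1, 0), 0) a1 (pdir ((0, 0), (0, 1), 0) a2
          (pdir ((1, 0), (0, 0), 0) b1 (pdir ((0, 1), (0, 0), 0) b2
            (decaySymbol μ ε)))) p|
        ≤ C * decaySymbol μ ε p *
            Real.sqrt (1 + |p.2.2| + p.2.1.1 ^ 2 + p.2.1.2 ^ 2)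
              ^ (-((a1 + a2 : ℕ) : ℝ)) :=
  stmt_12_general μ ε hμ a1 a2 b1 b2
end

section
/- Counting solution intervals in the angular equation: fix integers n₂, n₃ ≈ 2^{k+j} and an interval I of length ≈ 2^{j-k}·2^{-2k}·2^{2k} = 2^{j-k}. For positive integers n₁ with n₁·2^{-k} = |ξ|, consider solutions α ∈ [0, π/4] of 2|ξ||η|cos α + |ξ|² ∈ I where |η| = n₂2^{-k}. If n₁* is the value whose solution interval contains α = 0, then for any n₁ with a nonempty solution interval meeting [0,π/4] one has n₁* - 4 ≤ n₁ ≤ 4n₁*. -/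
set_option maxHeartbeats 1600000


/-- Counting solution intervals in the angular equation: with `n₂, n₃ ≈ 2^{k+j}` and
`I = I(n₂,n₃,k)` the target interval, if `n₁*` is the radius whose solution interval
contains `α = 0`, then any radius `n₁` admitting a solution `α ∈ [0, π/4]` satisfies
`n₁* - 4 ≤ n₁ ≤ 4 n₁*`. -/
theorem stmt_13 (k j n₂ n₃ : ℕ) (hkj : 1 ≤ k + j)
    (hn₂l : (2 : ℝ) ^ (k + j - 1) ≤ (n₂ : ℝ)) (hn₂u : (n₂ : ℝ) ≤ 2 ^ (k + j + 1))
    (hn₃l : (2 : ℝ) ^ (k + j - 1) ≤ (n₃ : ℝ)) (hn₃u : (n₃ : ℝ) ≤ 2 ^ (k + j + 1))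
    (I : Set ℝ)
    (hI : I = Set.Icc
      ((2 : ℝ) ^ (-(2 * (k : ℤ))) * ((n₃ : ℝ) ^ 2 - 2 * (n₃ : ℝ) + 1)
          - ((n₂ : ℝ) * (2 : ℝ) ^ (-(k : ℤ))) ^ 2)
      ((2 : ℝ) ^ (-(2 * (k : ℤ))) * ((n₃ : ℝ) ^ 2 + 2 * (n₃ : ℝ) + 1)
          - ((n₂ : ℝ) * (2 : ℝ) ^ (-(k : ℤ))) ^ 2))
    (n₁s : ℕ) (hs : 0 < n₁s)
    (h0 : 2 * ((n₁s : ℝ) * (2 : ℝ) ^ (-(k : ℤ))) * ((n₂ : ℝ) * (2 : ℝ) ^ (-(k : ℤ)))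
        + ((n₁s : ℝ) * (2 : ℝ) ^ (-(k : ℤ))) ^ 2 ∈ I)
    (n₁ : ℕ) (hn₁ : 0 < n₁)
    (hsol : ∃ α : ℝ, 0 ≤ α ∧ α ≤ Real.pi / 4 ∧
      2 * ((n₁ : ℝ) * (2 : ℝ) ^ (-(k : ℤ))) * ((n₂ : ℝ) * (2 : ℝ) ^ (-(k : ℤ)))
          * Real.cos α + ((n₁ : ℝ) * (2 : ℝ) ^ (-(k : ℤ))) ^ 2 ∈ I) :
    n₁s - 4 ≤ n₁ ∧ n₁ ≤ 4 * n₁s := by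
  obtain ⟨α, hα0, hα4, hmem⟩ := hsol
  subst hI
  set ε : ℝ := (2:ℝ)^(-(k:ℤ)) with hεdef
  have hεpos : (0:ℝ) < ε := by positivity
  have he2 : (2:ℝ)^(-(2*(k:ℤ))) = ε * ε := by
    rw [hεdef, ← zpow_add₀ (by norm_num : (2:ℝ) ≠ 0)]
    ring_nf
  rw [Set.mem_Icc, he2] at hmem h0
  obtain ⟨hL, hU⟩ := hmem
  obtain ⟨h0L, h0U⟩ := h0
  have hcos1 : Real.cos α ≤ 1 := Real.cos_le_one α
  have hcos2 : Real.sqrt 2 / 2 ≤ Real.cos α := by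
    rw [← Real.cos_pi_div_four]
    exact Real.cos_le_cos_of_nonneg_of_le_pi hα0 (by linarith [Real.pi_pos]) hα4
  have hr2 : Real.sqrt 2 ^ 2 = 2 := Real.sq_sqrt (by norm_num)
  have hr0 : (0:ℝ) ≤ Real.sqrt 2 := Real.sqrt_nonneg 2
  have hr14 : (1.4:ℝ) ≤ Real.sqrt 2 := by nlinarith
  have hB0 : (0:ℝ) ≤ (n₂:ℝ) * ε := by positivity
  have hX0 : (0:ℝ) ≤ (n₁:ℝ) * ε := by positivity
  have hS0 : (0:ℝ) ≤ (n₁s:ℝ) * ε := by positivity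
  have hN0 : (0:ℝ) ≤ (n₃:ℝ) := Nat.cast_nonneg n₃
  have hS1 : ε ≤ (n₁s:ℝ) * ε := by
    have h1 : (1:ℝ) ≤ (n₁s:ℝ) := by exact_mod_cast hs
    nlinarith
  have sqle : ∀ a d : ℝ, 0 ≤ a → 0 ≤ d → a^2 ≤ d^2 → a ≤ d := fun a d ha hd h =>
    (pow_le_pow_iff_left₀ ha hd two_ne_zero).1 h
  have hcXB : 2 * ((n₁:ℝ)*ε) * ((n₂:ℝ)*ε) * Real.cos α ≤ 2 * ((n₁:ℝ)*ε) * ((n₂:ℝ)*ε) :=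
    mul_le_of_le_one_right (by positivity) hcos1
  have hcXB2 : Real.sqrt 2 * ((n₁:ℝ)*ε) * ((n₂:ℝ)*ε) ≤
      2 * ((n₁:ℝ)*ε) * ((n₂:ℝ)*ε) * Real.cos α := by
    have hp : (0:ℝ) ≤ 2 * ((n₁:ℝ)*ε) * ((n₂:ℝ)*ε) := by positivity
    have h1 := mul_le_mul_of_nonneg_left hcos2 hp
    linarith [h1]
  -- from h0U : (S+B)^2 ≤ (Nε+ε)^2, so S+B ≤ Nε+ε
  have hA : (n₁s:ℝ)*ε + (n₂:ℝ)*ε ≤ (n₃:ℝ)*ε + ε := by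
    refine sqle _ _ (by positivity) (by positivity) ?_
    linarith [h0U]
  -- from hL with cos ≤ 1 : (X+B)^2 ≥ (Nε-ε)^2, X+B ≥ 0 so X+B ≥ Nε-ε
  have hB : (n₃:ℝ)*ε - ε ≤ (n₁:ℝ)*ε + (n₂:ℝ)*ε := by
    rcases le_or_gt ((n₃:ℝ)*ε - ε) 0 with h | h
    · linarith
    · refine sqle _ _ h.le (by positivity) ?_
      linarith [hL, hcXB]
  constructor
  · -- n₁s ≤ n₁ + 2
    have hreal : (n₁s:ℝ) * ε ≤ (n₁:ℝ) * ε + 2 * ε := by linarith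
    have hc : (n₁s:ℝ) ≤ (n₁:ℝ) + 2 := le_of_mul_le_mul_right (by linarith [hreal]) hεpos
    have hnat : n₁s ≤ n₁ + 2 := by exact_mod_cast hc
    omega
  · by_contra h
    push_neg at h
    have hX4 : 4 * ((n₁s:ℝ)*ε) + ε ≤ (n₁:ℝ)*ε := by
      have h4 : (4:ℝ) * (n₁s:ℝ) + 1 ≤ (n₁:ℝ) := by exact_mod_cast h
      nlinarith
    -- from h0L : (Nε-ε)^2 ≤ (S+B)^2, S+B ≥ 0 so Nε-ε ≤ S+B
    have hC : (n₃:ℝ)*ε - ε ≤ (n₁s:ℝ)*ε + (n₂:ℝ)*ε := by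
      rcases le_or_gt ((n₃:ℝ)*ε - ε) 0 with h' | h'
      · linarith
      · refine sqle _ _ h'.le (by positivity) ?_
        linarith [h0L]
    -- hU with cos ≥ √2/2 : X^2 + √2 X B ≤ (Nε+ε)^2 - B^2
    have hkey : ((n₁:ℝ)*ε)^2 + Real.sqrt 2 * ((n₁:ℝ)*ε) * ((n₂:ℝ)*ε)
        ≤ ((n₃:ℝ)*ε + ε)^2 - ((n₂:ℝ)*ε)^2 := by
      linarith [hU, hcXB2]
    -- Nε + ε ≤ S + B + 2ε
    have hT : (n₃:ℝ)*ε + ε ≤ (n₁s:ℝ)*ε + (n₂:ℝ)*ε + 2*ε := by linarith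
    have hT2 : ((n₃:ℝ)*ε + ε)^2 ≤ ((n₁s:ℝ)*ε + (n₂:ℝ)*ε + 2*ε)^2 :=
      (pow_le_pow_iff_left₀ (by positivity) (by positivity) two_ne_zero).2 hT
    have hX2 : (4 * ((n₁s:ℝ)*ε) + ε)^2 ≤ ((n₁:ℝ)*ε)^2 :=
      (pow_le_pow_iff_left₀ (by positivity) hX0 two_ne_zero).2 hX4
    have hXB : Real.sqrt 2 * (4 * ((n₁s:ℝ)*ε) + ε) * ((n₂:ℝ)*ε)
        ≤ Real.sqrt 2 * ((n₁:ℝ)*ε) * ((n₂:ℝ)*ε) := by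
      have h1 : Real.sqrt 2 * (4 * ((n₁s:ℝ)*ε) + ε) ≤ Real.sqrt 2 * ((n₁:ℝ)*ε) :=
        mul_le_mul_of_nonneg_left hX4 hr0
      exact mul_le_mul_of_nonneg_right h1 hB0
    have t1 : (0:ℝ) ≤ (Real.sqrt 2 - 1.4) * (((n₁s:ℝ)*ε) * ((n₂:ℝ)*ε)) :=
      mul_nonneg (by linarith) (mul_nonneg hS0 hB0)
    have t2 : (0:ℝ) ≤ (Real.sqrt 2 - 1.4) * (ε * ((n₂:ℝ)*ε)) :=
      mul_nonneg (by linarith) (mul_nonneg hεpos.le hB0)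
    have t3 : ε * ((n₂:ℝ)*ε) ≤ ((n₁s:ℝ)*ε) * ((n₂:ℝ)*ε) :=
      mul_le_mul_of_nonneg_right hS1 hB0
    have t4 : ε * ε ≤ ((n₁s:ℝ)*ε) * ((n₁s:ℝ)*ε) := mul_le_mul hS1 hS1 hεpos.le hS0
    have t5 : (0:ℝ) ≤ ((n₁s:ℝ)*ε) * ε := mul_nonneg hS0 hεpos.le
    linarith [hkey, hT2, hX2, hXB, t1, t2, t3, t4, t5, sq_nonneg ε, hεpos,
      mul_pos hεpos hεpos]
end
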